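/- Let d, n be positive integers, x_1, ..., x_n ∈ ℝ^d, λ > 0, and y ∈ {-1,1}^n with y_i = -1 for some i and y_j = 1 for some j. Then the DWD objective ψ(β₀, β) = (1/n) Σ_{i=1}^n V(y_i(β₀ + x_iᵀβ)) + (λ/2)‖β‖₂² is continuous, convex, and coercive on ℝ × ℝ^d (ψ(β₀, β) → ∞ as ‖(β₀, β)‖ → ∞), and hence attains its global minimum at some point (β̂₀, β̂) ∈ ℝ × ℝ^d; that is, the DWD solution exists. -/

import Mathlib

open scoped RealInnerProductSpace

/-- The DWD loss function. -/
noncomputable def V (u : ℝ) : ℝ := if u ≤ 1/2 then 1 - u else 1/(4*u)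

/-- The DWD objective as a function of the pair `(β₀, β)`:
`ψ(β₀, β) = (1/n) Σᵢ V(yᵢ(β₀ + xᵢᵀβ)) + (λ/2)‖β‖₂²`. -/
noncomputable def dwdObjective {d n : ℕ} (x : Fin n → EuclideanSpace ℝ (Fin d))
    (y : Fin n → ℝ) (lam : ℝ) (p : ℝ × EuclideanSpace ℝ (Fin d)) : ℝ :=
  (1 / n) * ∑ i, V (y i * (p.1 + ⟪x i, p.2⟫)) + (lam / 2) * ‖p.2‖^2

/-! `V` is the upper envelope of its tangent lines `u ↦ 1/(2s) - u/(4s²)`, `s ≥ 1/2` (the one at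
`s = max u (1/2)` touches `V` at `u`), so `V` and hence `ψ` are convex, and `ψ` is continuous on the
finite-dimensional space `ℝ × ℝ^d`. For a negative label `i` and a positive label `j`, the margins
`t_k = β₀ + ⟪x_k, β⟫` satisfy `V(-t_i) + V(t_j) ≥ max t_i (-t_j) ≥ |β₀| - (‖x_i‖ + ‖x_j‖)‖β‖`, so the
loss grows like `|β₀|` while `‖β‖` stays bounded, and the penalty `(λ/2)‖β‖²` controls large `‖β‖`.
Thus `ψ` is coercive and attains its minimum. -/

open Set

section Convexity

variable {E : Type*} [AddCommGroup E] [Module ℝ E]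

theorem convexOn_univ_of_forall_exists_affine_le {f : E → ℝ}
    (h : ∀ z, ∃ (c : ℝ) (ℓ : E →ₗ[ℝ] ℝ), (∀ x, c + ℓ x ≤ f x) ∧ c + ℓ z = f z) :
    ConvexOn ℝ univ f := by
  refine ⟨convex_univ, fun a _ b _ ta tb hta htb hab => ?_⟩
  obtain ⟨c, ℓ, hle, heq⟩ := h (ta • a + tb • b)
  calc f (ta • a + tb • b) = ta * (c + ℓ a) + tb * (c + ℓ b) := by
        rw [← heq, map_add, map_smul, map_smul, smul_eq_mul, smul_eq_mul]
        linear_combination c * hab.symm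
    _ ≤ ta • f a + tb • f b := by
        rw [smul_eq_mul, smul_eq_mul]
        gcongr
        exacts [hle a, hle b]

theorem ConvexOn.fun_sum {ι : Type*} {C : Set E} {s : Finset ι} {f : ι → E → ℝ}
    (hC : Convex ℝ C) (h : ∀ i ∈ s, ConvexOn ℝ C (f i)) :
    ConvexOn ℝ C fun x => ∑ i ∈ s, f i x := by
  simpa only [Finset.sum_fn] using
    Finset.sum_induction f (ConvexOn ℝ C) (fun _ _ => ConvexOn.add) (convexOn_const 0 hC) h

end Convexity

theorem V_nonneg (u : ℝ) : 0 ≤ V u := by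
  unfold V
  split_ifs with h
  · linarith
  · have : 0 < u := by linarith
    positivity

theorem one_sub_le_V (u : ℝ) : 1 - u ≤ V u := by
  unfold V
  split_ifs with h
  · rfl
  · rw [le_div_iff₀ (by linarith)]
    nlinarith [sq_nonneg (2 * u - 1)]

theorem le_V_neg_add_V (s t : ℝ) : max s (-t) ≤ V (-s) + V t := by
  have := one_sub_le_V (-s)
  have := one_sub_le_V t
  have := V_nonneg (-s)
  have := V_nonneg t
  exact max_le (by linarith) (by linarith)

theorem tangent_le_V {s : ℝ} (hs : 1/2 ≤ s) (u : ℝ) : 1/(2*s) - u/(4*s^2) ≤ V u := by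
  have hs0 : 0 < s := by linarith
  unfold V
  split_ifs with h
  · rw [div_sub_div _ _ (by positivity) (by positivity), div_le_iff₀ (by positivity)]
    nlinarith [mul_nonneg (by linarith : (0:ℝ) ≤ 2*s - 1) (by nlinarith : (0:ℝ) ≤ 2*s - u*(2*s+1))]
  · rw [div_sub_div _ _ (by positivity) (by positivity),
      div_le_div_iff₀ (by positivity) (by linarith)]
    nlinarith [sq_nonneg (s - u)]

theorem V_eq_tangent (u : ℝ) :
    V u = 1/(2 * max u (1/2)) - u/(4 * (max u (1/2))^2) := by
  unfold V
  split_ifs with h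
  · rw [max_eq_right h]
    ring
  · rw [max_eq_left (by linarith)]
    have : u ≠ 0 := by linarith
    field_simp
    ring

theorem convexOn_V : ConvexOn ℝ univ V := by
  refine convexOn_univ_of_forall_exists_affine_le fun z => ?_
  refine ⟨1/(2 * max z (1/2)), -(1/(4 * max z (1/2) ^ 2)) • LinearMap.id, fun u => ?_, ?_⟩
  · simpa [sub_eq_add_neg, div_eq_mul_inv, mul_comm] using tangent_le_V (le_max_right z _) u
  · simpa [sub_eq_add_neg, div_eq_mul_inv, mul_comm] using (V_eq_tangent z).symm

theorem prod_coercive_of_lower_bounds {E : Type*} [SeminormedAddCommGroup E]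
    {f : ℝ × E → ℝ} {a c M : ℝ} (ha : 0 < a) (hc : 0 < c) (hM : 0 ≤ M)
    (h_snd : ∀ p, a * ‖p.2‖ ^ 2 ≤ f p) (h_fst : ∀ p, c * (|p.1| - M * ‖p.2‖) ≤ f p) :
    ∀ r, ∃ R, ∀ p, R ≤ ‖p‖ → r ≤ f p := by
  intro r
  set B := max 1 (r / a)
  have hB1 : 1 ≤ B := le_max_left _ _
  have hBr : r ≤ a * B := by
    have := mul_le_mul_of_nonneg_left (le_max_right 1 (r / a)) ha.le
    rwa [mul_div_cancel₀ _ ha.ne'] at this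
  refine ⟨max B (r / c + M * B), fun p hp => ?_⟩
  rw [Prod.norm_def, Real.norm_eq_abs] at hp
  rcases le_or_gt B ‖p.2‖ with hbig | hsmall
  · have : a * B ≤ a * ‖p.2‖ ^ 2 := by gcongr; nlinarith
    linarith [h_snd p]
  · have h1 : r / c + M * B ≤ |p.1| := by
      rcases max_choice |p.1| ‖p.2‖ with he | he <;> rw [he] at hp
      · exact (le_max_right _ _).trans hp
      · exact absurd ((le_max_left _ _).trans hp) (not_le.2 hsmall)
    have h2 : r / c ≤ |p.1| - M * ‖p.2‖ := by nlinarith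
    calc r = c * (r / c) := (mul_div_cancel₀ _ hc.ne').symm
      _ ≤ c * (|p.1| - M * ‖p.2‖) := by gcongr
      _ ≤ f p := h_fst p

section DWD

variable {d n : ℕ} (x : Fin n → EuclideanSpace ℝ (Fin d)) (y : Fin n → ℝ)

theorem convexOn_dwdObjective {lam : ℝ} (hlam : 0 ≤ lam) :
    ConvexOn ℝ univ (dwdObjective x y lam) := by
  have margin (i : Fin n) : ConvexOn ℝ univ fun p : ℝ × EuclideanSpace ℝ (Fin d) =>
      V (y i * (p.1 + ⟪x i, p.2⟫)) :=
    convexOn_V.comp_linearMap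
      (y i • (LinearMap.fst ℝ ℝ (EuclideanSpace ℝ (Fin d)) +
        (innerₗ _ (x i)).comp (LinearMap.snd ℝ ℝ _)))
  have penalty := ((convexOn_norm convex_univ).pow (fun _ _ => norm_nonneg _) 2).comp_linearMap
    (LinearMap.snd ℝ ℝ (EuclideanSpace ℝ (Fin d)))
  exact ((ConvexOn.fun_sum convex_univ fun i _ => margin i).smul
    (one_div_nonneg.2 (Nat.cast_nonneg n))).add (penalty.smul (div_nonneg hlam zero_le_two))

theorem penalty_le_dwdObjective (lam : ℝ) (p : ℝ × EuclideanSpace ℝ (Fin d)) :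
    (lam / 2) * ‖p.2‖ ^ 2 ≤ dwdObjective x y lam p := by
  have : 0 ≤ (1 / n : ℝ) * ∑ i, V (y i * (p.1 + ⟪x i, p.2⟫)) :=
    mul_nonneg (by positivity) (Finset.sum_nonneg fun i _ => V_nonneg _)
  unfold dwdObjective
  linarith

theorem abs_fst_le_dwdObjective {lam : ℝ} (hlam : 0 ≤ lam) {i j : Fin n}
    (hi : y i = -1) (hj : y j = 1) (p : ℝ × EuclideanSpace ℝ (Fin d)) :
    (1 / n) * (|p.1| - (‖x i‖ + ‖x j‖) * ‖p.2‖) ≤ dwdObjective x y lam p := by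
  have hij : i ≠ j := fun h => by norm_num [h, hj] at hi
  have hxi := abs_le.1 (abs_real_inner_le_norm (x i) p.2)
  have hxj := abs_le.1 (abs_real_inner_le_norm (x j) p.2)
  have hpair : |p.1| - (‖x i‖ + ‖x j‖) * ‖p.2‖ ≤
      V (y i * (p.1 + ⟪x i, p.2⟫)) + V (y j * (p.1 + ⟪x j, p.2⟫)) := by
    rw [hi, hj, neg_one_mul, one_mul]
    refine le_trans ?_ (le_V_neg_add_V _ _)
    have := mul_nonneg (norm_nonneg (x i)) (norm_nonneg p.2)
    have := mul_nonneg (norm_nonneg (x j)) (norm_nonneg p.2)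
    rcases abs_cases p.1 with ⟨h, _⟩ | ⟨h, _⟩ <;> rw [h]
    · exact le_max_of_le_left (by linarith)
    · exact le_max_of_le_right (by linarith)
  have hsum := Finset.add_le_sum (fun k _ => V_nonneg (y k * (p.1 + ⟪x k, p.2⟫)))
    (Finset.mem_univ i) (Finset.mem_univ j) hij
  have : 0 ≤ (lam / 2) * ‖p.2‖ ^ 2 := by positivity
  unfold dwdObjective
  nlinarith [show (0 : ℝ) ≤ 1 / n by positivity]

end DWD

theorem dwd_solution_exists_general (d n : ℕ)
    (x : Fin n → EuclideanSpace ℝ (Fin d)) (lam : ℝ) (hlam : 0 < lam)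
    (y : Fin n → ℝ)
    (hneg : ∃ i, y i = -1) (hpos : ∃ j, y j = 1) :
    Continuous (dwdObjective x y lam) ∧
      ConvexOn ℝ Set.univ (dwdObjective x y lam) ∧
      (∀ r : ℝ, ∃ R : ℝ, ∀ p : ℝ × EuclideanSpace ℝ (Fin d),
        R ≤ ‖p‖ → r ≤ dwdObjective x y lam p) ∧
      ∃ phat : ℝ × EuclideanSpace ℝ (Fin d),
        ∀ p : ℝ × EuclideanSpace ℝ (Fin d),
          dwdObjective x y lam phat ≤ dwdObjective x y lam p := by
  obtain ⟨i, hi⟩ := hneg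
  obtain ⟨j, hj⟩ := hpos
  have hconv := convexOn_dwdObjective x y hlam.le
  have hcont : Continuous (dwdObjective x y lam) :=
    continuousOn_univ.1 (hconv.continuousOn isOpen_univ)
  have hcoer := prod_coercive_of_lower_bounds (half_pos hlam)
    (one_div_pos.2 (Nat.cast_pos.2 i.pos)) (by positivity)
    (penalty_le_dwdObjective x y lam) (abs_fst_le_dwdObjective x y hlam.le hi hj)
  have htend : Filter.Tendsto (dwdObjective x y lam) (Filter.cocompact _) Filter.atTop := by
    refine Filter.tendsto_atTop.2 fun r => ?_
    obtain ⟨R, hR⟩ := hcoer r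
    exact (tendsto_norm_cocompact_atTop.eventually_ge_atTop R).mono hR
  exact ⟨hcont, hconv, hcoer, hcont.exists_forall_le htend⟩

/-- if both classes are present, the DWD objective `ψ` is
continuous, convex, and coercive on `ℝ × ℝ^d`, and attains its global minimum
at some `(β̂₀, β̂)`: the DWD solution exists. -/
theorem dwd_solution_exists (d n : ℕ) (hd : 0 < d) (hn : 0 < n)
    (x : Fin n → EuclideanSpace ℝ (Fin d)) (lam : ℝ) (hlam : 0 < lam)
    (y : Fin n → ℝ) (hy : ∀ i, y i = -1 ∨ y i = 1)
    (hneg : ∃ i, y i = -1) (hpos : ∃ j, y j = 1) :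
    Continuous (dwdObjective x y lam) ∧
      ConvexOn ℝ Set.univ (dwdObjective x y lam) ∧
      (∀ r : ℝ, ∃ R : ℝ, ∀ p : ℝ × EuclideanSpace ℝ (Fin d),
        R ≤ ‖p‖ → r ≤ dwdObjective x y lam p) ∧
      ∃ phat : ℝ × EuclideanSpace ℝ (Fin d),
        ∀ p : ℝ × EuclideanSpace ℝ (Fin d),
          dwdObjective x y lam phat ≤ dwdObjective x y lam p :=
  dwd_solution_exists_general d n x lam hlam y hneg hpos
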